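/- arXiv:0910.0777 — 4 statements merged into one kernel-verified Lean document; each statement's English description precedes it below -/
import Mathlib

section
/- Let p and w be nonnegative real-valued functions on a finite set, let OPT be a subset with total weight w(OPT) <= k, and let S_1,...,S_{l+1} be disjoint subsets such that for each i, letting U_{i-1} = S_1 ∪ ... ∪ S_{i-1}, the ratio p(S_i)/w(S_i) is at least beta times the ratio p(Y)/w(Y) for every part Y of some partition of OPT \ U_{i-1}. Then for each i, p(S_i) >= beta * (w(S_i)/k) * (p(OPT) - p(U_{i-1})). -/
/-!
Put `R = OPT \ U_{i-1}`. Summing the inequalities `β p(Y) ≤ (p(S_i)/w(S_i)) w(Y)` over the parts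
`Y` of the partition of `R` gives `β p(R) ≤ (p(S_i)/w(S_i)) w(R)`, and `w(R) ≤ w(OPT) ≤ k`.
Since profits are nonnegative, `p(OPT) - p(U_{i-1}) ≤ p(R)`, which yields the bound.
-/

open Finset

namespace Finset

theorem sum_le_mul_sum_of_div_le {ι : Type*} (s : Finset ι) {f g : ι → ℝ} {c : ℝ}
    (hg : ∀ i ∈ s, 0 < g i) (h : ∀ i ∈ s, f i / g i ≤ c) :
    ∑ i ∈ s, f i ≤ c * ∑ i ∈ s, g i := by
  rw [mul_sum]
  exact sum_le_sum fun i hi => (div_le_iff₀ (hg i hi)).mp (h i hi)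

theorem sum_sub_sum_le_sum_sdiff {α : Type*} [DecidableEq α] (s t : Finset α) {f : α → ℝ}
    (hf : ∀ a, 0 ≤ f a) :
    ∑ a ∈ s, f a - ∑ a ∈ t, f a ≤ ∑ a ∈ s \ t, f a := by
  have hinter : ∑ a ∈ s ∩ t, f a ≤ ∑ a ∈ t, f a :=
    sum_le_sum_of_subset_of_nonneg inter_subset_right fun a _ _ => hf a
  linarith [sum_inter_add_sum_sdiff s t f]

end Finset

section GreedyStep

variable {α : Type*} [DecidableEq α] (p w : α → ℝ)

theorem mul_sum_le_of_forall_ratio_le {β c : ℝ} {R : Finset α} (𝒴 : Finset (Finset α))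
    (hwpos : ∀ Y ∈ 𝒴, 0 < ∑ a ∈ Y, w a) (hpd : (𝒴 : Set (Finset α)).PairwiseDisjoint id)
    (hbi : 𝒴.biUnion id = R)
    (hratio : ∀ Y ∈ 𝒴, c ≥ β * ((∑ a ∈ Y, p a) / (∑ a ∈ Y, w a))) :
    β * ∑ a ∈ R, p a ≤ c * ∑ a ∈ R, w a := by
  subst hbi
  rw [sum_biUnion hpd, sum_biUnion hpd, mul_sum]
  exact sum_le_mul_sum_of_div_le 𝒴 hwpos fun Y hY => by
    rw [mul_div_assoc]
    exact hratio Y hY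

variable {p w}

theorem greedy_step_bound (hp : ∀ a, 0 ≤ p a) (hw : ∀ a, 0 ≤ w a) {k β : ℝ} (hk : 0 < k)
    (hβ : 0 < β) {OPT U S : Finset α} (hOPT : ∑ a ∈ OPT, w a ≤ k) (hS : 0 < ∑ a ∈ S, w a)
    (hbound : β * ∑ a ∈ OPT \ U, p a ≤
      (∑ a ∈ S, p a) / (∑ a ∈ S, w a) * ∑ a ∈ OPT \ U, w a) :
    β * ((∑ a ∈ S, w a) / k) * (∑ a ∈ OPT, p a - ∑ a ∈ U, p a) ≤ ∑ a ∈ S, p a := by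
  set pS := ∑ a ∈ S, p a
  set wS := ∑ a ∈ S, w a
  have hpS : 0 ≤ pS := sum_nonneg fun a _ => hp a
  have hwR : ∑ a ∈ OPT \ U, w a ≤ k :=
    (sum_le_sum_of_subset_of_nonneg sdiff_subset fun a _ _ => hw a).trans hOPT
  calc β * (wS / k) * (∑ a ∈ OPT, p a - ∑ a ∈ U, p a)
      ≤ wS / k * (β * ∑ a ∈ OPT \ U, p a) := by
        rw [mul_left_comm, mul_assoc]
        gcongr
        exact sum_sub_sum_le_sum_sdiff OPT U hp
    _ ≤ wS / k * (pS / wS * ∑ a ∈ OPT \ U, w a) := by gcongr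
    _ = pS * ((∑ a ∈ OPT \ U, w a) / k) := by field_simp
    _ ≤ pS * 1 := by gcongr; exact (div_le_one hk).mpr hwR
    _ = pS := mul_one pS

end GreedyStep

theorem stmt_3_general {α : Type*} [DecidableEq α] (p w : α → ℝ)
    (hp : ∀ a, 0 ≤ p a) (hw : ∀ a, 0 ≤ w a)
    (k β : ℝ) (hk : 0 < k) (hβ : 0 < β)
    (OPT : Finset α) (hOPT : ∑ a ∈ OPT, w a ≤ k)
    (l : ℕ) (S : Fin (l + 1) → Finset α)
    (hSpos : ∀ i, 0 < ∑ a ∈ S i, w a)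
    (hgreedy : ∀ i : Fin (l + 1), ∃ 𝒴 : Finset (Finset α),
      (∀ Y ∈ 𝒴, Y.Nonempty) ∧ (∀ Y ∈ 𝒴, 0 < ∑ a ∈ Y, w a) ∧
      ((𝒴 : Set (Finset α)).PairwiseDisjoint id) ∧
      (𝒴.biUnion id = OPT \ (Finset.univ.filter (fun j => j < i)).biUnion S) ∧
      ∀ Y ∈ 𝒴, (∑ a ∈ S i, p a) / (∑ a ∈ S i, w a) ≥
        β * ((∑ a ∈ Y, p a) / (∑ a ∈ Y, w a))) :
    ∀ i : Fin (l + 1),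
      ∑ a ∈ S i, p a ≥ β * ((∑ a ∈ S i, w a) / k) *
        ((∑ a ∈ OPT, p a) -
          ∑ a ∈ (Finset.univ.filter (fun j => j < i)).biUnion S, p a) := by
  intro i
  obtain ⟨𝒴, -, hwpos, hpd, hbi, hratio⟩ := hgreedy i
  exact greedy_step_bound hp hw hk hβ hOPT (hSpos i)
    (mul_sum_le_of_forall_ratio_le p w 𝒴 hwpos hpd hbi hratio)

/-- Greedy step lemma: if each S_i beats, up to a factor β, the profit-to-weight ratio of
every part of some partition of OPT \ U_{i-1}, then
p(S_i) ≥ β (w(S_i)/k) (p(OPT) - p(U_{i-1})). -/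
theorem stmt_3 {α : Type*} [DecidableEq α] (p w : α → ℝ)
    (hp : ∀ a, 0 ≤ p a) (hw : ∀ a, 0 ≤ w a)
    (k β : ℝ) (hk : 0 < k) (hβ : 0 < β)
    (OPT : Finset α) (hOPT : ∑ a ∈ OPT, w a ≤ k)
    (l : ℕ) (S : Fin (l + 1) → Finset α)
    (hdisj : ∀ i j, i ≠ j → Disjoint (S i) (S j))
    (hSpos : ∀ i, 0 < ∑ a ∈ S i, w a)
    (hgreedy : ∀ i : Fin (l + 1), ∃ 𝒴 : Finset (Finset α),
      (∀ Y ∈ 𝒴, Y.Nonempty) ∧ (∀ Y ∈ 𝒴, 0 < ∑ a ∈ Y, w a) ∧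
      ((𝒴 : Set (Finset α)).PairwiseDisjoint id) ∧
      (𝒴.biUnion id = OPT \ (Finset.univ.filter (fun j => j < i)).biUnion S) ∧
      ∀ Y ∈ 𝒴, (∑ a ∈ S i, p a) / (∑ a ∈ S i, w a) ≥
        β * ((∑ a ∈ Y, p a) / (∑ a ∈ Y, w a))) :
    ∀ i : Fin (l + 1),
      ∑ a ∈ S i, p a ≥ β * ((∑ a ∈ S i, w a) / k) *
        ((∑ a ∈ OPT, p a) -
          ∑ a ∈ (Finset.univ.filter (fun j => j < i)).biUnion S, p a) :=
  stmt_3_general p w hp hw k β hk hβ OPT hOPT l S hSpos hgreedy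
end

section
/- Let G be an undirected graph with connected components G_1,...,G_t listed in decreasing order of size, and let k <= |V(G)|. The maximum size of a 1-neighbour set of size at most k equals: k, unless either (a) every component has size exactly 2 and k is odd, in which case it is k-1, or (b) k = 1 and every component has size at least 2, in which case it is 0. -/
/-!
If no vertex is isolated, a 1-neighbour set is never a single vertex; if moreover every
component is a single edge, every vertex of a 1-neighbour set has a unique neighbour and it
lies in the set, so the set is a union of edges and has even size.

Conversely, a 1-neighbour set `U` with `|U| + 2 ≤ |V|` can always be enlarged by exactly two
vertices, so every size `k ≤ |V|` of the same parity as a starting 1-neighbour set is attained.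
The starting sets are `∅`, an isolated vertex, and a path on three vertices, which exists in
any component with at least three vertices.
-/

namespace SimpleGraph

variable {V : Type*} (G : SimpleGraph V)

def IsOneNeighbourSet (U : Finset V) : Prop :=
  ∀ v ∈ U, (∃ w ∈ U, G.Adj v w) ∨ ∀ w, ¬ G.Adj v w

variable {G}

theorem isOneNeighbourSet_empty : G.IsOneNeighbourSet ∅ := by
  simp [IsOneNeighbourSet]

theorem isOneNeighbourSet_pair [DecidableEq V] {v w : V} (h : G.Adj v w) :
    G.IsOneNeighbourSet {v, w} := by
  simp only [IsOneNeighbourSet, Finset.mem_insert, Finset.mem_singleton]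
  rintro x (rfl | rfl)
  · exact Or.inl ⟨w, by simp, h⟩
  · exact Or.inl ⟨v, by simp, h.symm⟩

namespace IsOneNeighbourSet

variable {U U' : Finset V}

theorem exists_adj_mem (hU : G.IsOneNeighbourSet U) (hG : ∀ v, ∃ w, G.Adj v w) :
    ∀ v ∈ U, ∃ w ∈ U, G.Adj v w := by
  intro v hv
  refine (hU v hv).resolve_right fun hiso ↦ ?_
  obtain ⟨w, hvw⟩ := hG v
  exact hiso w hvw

theorem card_ne_one (hU : G.IsOneNeighbourSet U) (hG : ∀ v, ∃ w, G.Adj v w) : U.card ≠ 1 := by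
  intro h
  obtain ⟨v, rfl⟩ := Finset.card_eq_one.mp h
  obtain ⟨w, hw, hvw⟩ := hU.exists_adj_mem hG v (Finset.mem_singleton_self v)
  exact hvw.ne (Finset.mem_singleton.mp hw).symm

variable [DecidableEq V]

theorem union (hU : G.IsOneNeighbourSet U) (hU' : G.IsOneNeighbourSet U') :
    G.IsOneNeighbourSet (U ∪ U') := by
  intro v hv
  rcases Finset.mem_union.mp hv with hv | hv
  · exact (hU v hv).imp_left fun ⟨w, hw, h⟩ ↦ ⟨w, Finset.mem_union_left _ hw, h⟩
  · exact (hU' v hv).imp_left fun ⟨w, hw, h⟩ ↦ ⟨w, Finset.mem_union_right _ hw, h⟩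

theorem insert {v : V} (hU : G.IsOneNeighbourSet U)
    (hv : (∃ w ∈ U, G.Adj v w) ∨ ∀ w, ¬ G.Adj v w) : G.IsOneNeighbourSet (insert v U) := by
  intro x hx
  obtain rfl | hx := Finset.mem_insert.mp hx
  · exact hv.imp_left fun ⟨w, hw, h⟩ ↦ ⟨w, Finset.mem_insert_of_mem hw, h⟩
  · exact (hU x hx).imp_left fun ⟨w, hw, h⟩ ↦ ⟨w, Finset.mem_insert_of_mem hw, h⟩

variable [Fintype V]

-- Either an edge outside `U` can be added, or every vertex outside `U` has all its
-- neighbours in `U`, and then any two of them can be added.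
theorem exists_card_add_two (hU : G.IsOneNeighbourSet U) (h : U.card + 2 ≤ Fintype.card V) :
    ∃ U', G.IsOneNeighbourSet U' ∧ U'.card = U.card + 2 := by
  by_cases hedge : ∃ v w, v ∉ U ∧ w ∉ U ∧ G.Adj v w
  · obtain ⟨v, w, hv, hw, hvw⟩ := hedge
    refine ⟨U ∪ {v, w}, hU.union (isOneNeighbourSet_pair hvw), ?_⟩
    rw [Finset.card_union_of_disjoint (by simp [hv, hw]), Finset.card_pair hvw.ne]
  push Not at hedge
  have hout : ∀ v ∉ U, (∃ w ∈ U, G.Adj v w) ∨ ∀ w, ¬ G.Adj v w := by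
    intro v hv
    by_contra! hcon
    obtain ⟨w, hvw⟩ := hcon.2
    exact hcon.1 w (by_contra fun hw ↦ hedge v w hv hw hvw) hvw
  have hcompl : 1 < Uᶜ.card := by rw [Finset.card_compl]; omega
  obtain ⟨v, hv, w, hw, hvw⟩ := Finset.one_lt_card.mp hcompl
  rw [Finset.mem_compl] at hv hw
  refine ⟨_, (hU.insert (v := w) (hout w hw)).insert (v := v) ?_, ?_⟩
  · exact (hout v hv).imp_left fun ⟨x, hx, h⟩ ↦ ⟨x, Finset.mem_insert_of_mem hx, h⟩
  · rw [Finset.card_insert_of_notMem (by simp [hvw, hv]), Finset.card_insert_of_notMem hw]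

theorem exists_card_add_two_mul (hU : G.IsOneNeighbourSet U) (n : ℕ)
    (h : U.card + 2 * n ≤ Fintype.card V) :
    ∃ U', G.IsOneNeighbourSet U' ∧ U'.card = U.card + 2 * n := by
  induction n with
  | zero => exact ⟨U, hU, rfl⟩
  | succ n ih =>
    obtain ⟨U', hU', hcard⟩ := ih (by omega)
    obtain ⟨U'', hU'', hcard'⟩ := hU'.exists_card_add_two (by omega)
    exact ⟨U'', hU'', by omega⟩

end IsOneNeighbourSet

theorem even_card_of_forall_exists_adj_mem [DecidableEq V]
    (hG : ∀ v, (G.neighborSet v).Subsingleton) (U : Finset V)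
    (hU : ∀ v ∈ U, ∃ w ∈ U, G.Adj v w) : Even U.card := by
  induction U using Finset.strongInduction with
  | H U ih =>
    obtain rfl | ⟨v, hv⟩ := U.eq_empty_or_nonempty
    · simp
    obtain ⟨w, hw, hvw⟩ := hU v hv
    have hrest : ∀ x ∈ (U.erase v).erase w, ∃ y ∈ (U.erase v).erase w, G.Adj x y := by
      intro x hx
      simp only [Finset.mem_erase] at hx
      obtain ⟨y, hy, hxy⟩ := hU x hx.2.2
      refine ⟨y, Finset.mem_erase.mpr ⟨?_, Finset.mem_erase.mpr ⟨?_, hy⟩⟩, hxy⟩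
      · intro hyw
        rw [hyw] at hxy
        exact hx.2.1 (hG w hxy.symm hvw.symm)
      · intro hyv
        rw [hyv] at hxy
        exact hx.1 (hG v hxy.symm hvw)
    have hcard : ((U.erase v).erase w).card + 2 = U.card := by
      have : 1 < U.card := Finset.one_lt_card.mpr ⟨v, hv, w, hw, hvw.ne⟩
      rw [Finset.card_erase_of_mem (Finset.mem_erase.mpr ⟨hvw.ne.symm, hw⟩),
        Finset.card_erase_of_mem hv]
      omega
    rw [← hcard]
    exact (ih _ ((Finset.erase_subset _ _).trans_ssubset (Finset.erase_ssubset hv)) hrest).add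
      even_two

section Components

variable [Finite V]

theorem exists_adj_iff_one_lt_ncard_supp (v : V) :
    (∃ w, G.Adj v w) ↔ 1 < (G.connectedComponentMk v).supp.ncard := by
  constructor
  · rintro ⟨w, hvw⟩
    exact (Set.one_lt_ncard (Set.toFinite _)).mpr
      ⟨v, rfl, w, (ConnectedComponent.connectedComponentMk_eq_of_adj hvw).symm, hvw.ne⟩
  · intro h
    obtain ⟨u, hu, huv⟩ := Set.exists_ne_of_one_lt_ncard h v
    obtain ⟨p⟩ := ConnectedComponent.exact hu.symm
    exact ⟨_, p.adj_snd (Walk.not_nil_of_ne huv.symm)⟩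

theorem forall_exists_adj_iff_forall_one_lt_ncard_supp :
    (∀ v, ∃ w, G.Adj v w) ↔ ∀ c : G.ConnectedComponent, 1 < c.supp.ncard :=
  ⟨fun h c ↦ c.ind fun v ↦ (exists_adj_iff_one_lt_ncard_supp v).mp (h v),
    fun h v ↦ (exists_adj_iff_one_lt_ncard_supp v).mpr (h _)⟩

theorem neighborSet_subsingleton_of_ncard_supp_le_two {v : V}
    (h : (G.connectedComponentMk v).supp.ncard ≤ 2) : (G.neighborSet v).Subsingleton := by
  intro w hw w' hw'
  by_contra hne
  rw [mem_neighborSet] at hw hw'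
  have hsub : ({v, w, w'} : Set V) ⊆ (G.connectedComponentMk v).supp := by
    rintro x (rfl | rfl | rfl)
    · rfl
    · exact (ConnectedComponent.connectedComponentMk_eq_of_adj hw).symm
    · exact (ConnectedComponent.connectedComponentMk_eq_of_adj hw').symm
  have := Set.ncard_le_ncard hsub
  rw [Set.ncard_eq_three.mpr ⟨v, w, w', hw.ne, hw'.ne, hne, rfl⟩] at this
  omega

theorem exists_isOneNeighbourSet_card_three [DecidableEq V] {v : V}
    (h : 2 < (G.connectedComponentMk v).supp.ncard) :
    ∃ U, G.IsOneNeighbourSet U ∧ U.card = 3 := by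
  obtain ⟨w, hvw⟩ := (exists_adj_iff_one_lt_ncard_supp (G := G) v).mpr (by omega)
  obtain ⟨x, hx, hxvw⟩ := Set.exists_mem_notMem_of_ncard_lt_ncard (s := {v, w})
    (t := (G.connectedComponentMk v).supp) (by rw [Set.ncard_pair hvw.ne]; omega)
  obtain ⟨p⟩ := ConnectedComponent.exact hx.symm
  -- the walk from `v` to `x` leaves the edge `vw` along some edge
  obtain ⟨d, -, hd, hd'⟩ := p.exists_boundary_dart {v, w} (by simp) hxvw
  refine ⟨_, (isOneNeighbourSet_pair hvw).insert (v := d.snd)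
    (Or.inl ⟨d.fst, by simpa using hd, d.adj.symm⟩), ?_⟩
  rw [Finset.card_insert_of_notMem (by simpa using hd'), Finset.card_pair hvw.ne]

end Components

theorem exists_isOneNeighbourSet_card [Fintype V] [DecidableEq V] {k : ℕ}
    (hk : k ≤ Fintype.card V) (h1 : k = 1 → ∃ v, ∀ w, ¬ G.Adj v w)
    (hodd : Odd k → ∃ v, (G.connectedComponentMk v).supp.ncard ≠ 2) :
    ∃ U, G.IsOneNeighbourSet U ∧ U.card = k := by
  obtain ⟨n, rfl | rfl⟩ := Nat.even_or_odd' k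
  · simpa using isOneNeighbourSet_empty.exists_card_add_two_mul n (by simpa using hk)
  by_cases hiso : ∃ v, ∀ w, ¬ G.Adj v w
  · obtain ⟨v, hv⟩ := hiso
    have hU := isOneNeighbourSet_empty.insert (G := G) (v := v) (Or.inr hv)
    simpa [add_comm] using hU.exists_card_add_two_mul n (by simpa [add_comm] using hk)
  push Not at hiso
  obtain ⟨v, hv⟩ := hodd (odd_two_mul_add_one n)
  have hn : n ≠ 0 := by
    rintro rfl
    obtain ⟨u, hu⟩ := h1 rfl
    obtain ⟨w, huw⟩ := hiso u
    exact hu w huw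
  have h2 := (exists_adj_iff_one_lt_ncard_supp v).mp (hiso v)
  obtain ⟨U, hU, hU3⟩ := exists_isOneNeighbourSet_card_three (G := G) (v := v) (by omega)
  obtain ⟨U', hU', hcard⟩ := hU.exists_card_add_two_mul (n - 1) (by omega)
  exact ⟨U', hU', by omega⟩

end SimpleGraph

open SimpleGraph

open Classical in
/-- The maximum size of a 1-neighbour set of size at most k in an undirected graph equals
k, unless every connected component has size exactly 2 and k is odd (in which case it is
k - 1), or k = 1 and every component has size at least 2 (in which case it is 0). -/
theorem stmt_12 {V : Type*} [Fintype V] (G : SimpleGraph V)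
    (k : ℕ) (hk : k ≤ Fintype.card V) :
    IsGreatest {n : ℕ | ∃ U : Finset V,
        (∀ v ∈ U, (∃ w ∈ U, G.Adj v w) ∨ ∀ w, ¬ G.Adj v w) ∧
        U.card ≤ k ∧ U.card = n}
      (if (∀ c : G.ConnectedComponent, c.supp.ncard = 2) ∧ Odd k then k - 1
       else if k = 1 ∧ (∀ c : G.ConnectedComponent, 2 ≤ c.supp.ncard) then 0
       else k) := by
  refine ⟨?_, ?_⟩
  · split_ifs with hA hB
    · obtain ⟨m, rfl⟩ := hA.2
      obtain ⟨U, hU, hcard⟩ := isOneNeighbourSet_empty.exists_card_add_two_mul (G := G) m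
        (by rw [Finset.card_empty]; omega)
      rw [Finset.card_empty] at hcard
      exact ⟨U, hU, by omega, by omega⟩
    · exact ⟨∅, isOneNeighbourSet_empty, by simp, rfl⟩
    · refine (exists_isOneNeighbourSet_card hk (fun hk1 ↦ ?_) (fun hodd ↦ ?_)).imp
        fun U ⟨hU, hcard⟩ ↦ ⟨hU, hcard.le, hcard⟩
      · by_contra! h
        exact hB ⟨hk1, forall_exists_adj_iff_forall_one_lt_ncard_supp.mp h⟩
      · by_contra! h
        exact hA ⟨fun c ↦ c.ind h, hodd⟩
  · rintro _ ⟨U, hU, hle, rfl⟩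
    split_ifs with hA hB
    · have hadj := IsOneNeighbourSet.exists_adj_mem hU <|
        forall_exists_adj_iff_forall_one_lt_ncard_supp.mpr fun c ↦ by rw [hA.1 c]; norm_num
      have := even_card_of_forall_exists_adj_mem
        (fun v ↦ neighborSet_subsingleton_of_ncard_supp_le_two (hA.1 _).le) U hadj
      grind
    · have := IsOneNeighbourSet.card_ne_one hU <|
        forall_exists_adj_iff_forall_one_lt_ncard_supp.mpr hB.2
      omega
    · exact hle
end

section
/- Let r, r_1, ..., r_m, w_1, ..., w_m, and P be nonnegative reals with each w_j > 0, and suppose sets S and S* satisfy: p'(v) = floor(p(v) / (eps*P/n)) for all items v, S maximizes adjusted profit-to-weight ratio among feasible sets, and |S*| <= n. Then the true profit-to-weight ratio of S satisfies r(S) >= r(S*) - eps * P / w(S*). -/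
/-!
Rounding `p(v)` down to a multiple of `c = ε·P/n` loses less than `c` per item, so over the
at most `n` items of `S*` the rounded profit loses less than `ε·P`, while on `S` rounding can
only decrease the profit. Dividing by the weights and chaining through the assumed comparison of
rounded ratios gives the bound.
-/

open Finset

section RoundDown

variable {ι : Type*} {c : ℝ}

lemma mul_floor_div_le (hc : 0 < c) (x : ℝ) : c * ⌊x / c⌋ ≤ x :=
  (le_div_iff₀' hc).mp (Int.floor_le _)

lemma sub_le_mul_floor_div (hc : 0 < c) (x : ℝ) : x - c ≤ c * ⌊x / c⌋ := by
  have h := (Int.sub_one_lt_floor (x / c)).le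
  rwa [sub_le_iff_le_add, div_le_iff₀ hc, add_mul, one_mul, ← sub_le_iff_le_add,
    mul_comm] at h

lemma mul_sum_floor_div_le (hc : 0 < c) (s : Finset ι) (f : ι → ℝ) :
    c * ∑ v ∈ s, (⌊f v / c⌋ : ℝ) ≤ ∑ v ∈ s, f v := by
  rw [mul_sum]
  exact sum_le_sum fun v _ => mul_floor_div_le hc (f v)

lemma sum_sub_card_mul_le_mul_sum_floor_div (hc : 0 < c) (s : Finset ι) (f : ι → ℝ) :
    ∑ v ∈ s, f v - s.card * c ≤ c * ∑ v ∈ s, (⌊f v / c⌋ : ℝ) := by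
  rw [mul_sum, ← nsmul_eq_mul, ← sum_const, ← sum_sub_distrib]
  exact sum_le_sum fun v _ => sub_le_mul_floor_div hc (f v)

end RoundDown

theorem stmt_15_general {α : Type*} (n : ℕ) (hn : 0 < n) (eps P : ℝ)
    (heps : 0 < eps) (hP : 0 < P)
    (p w : α → ℝ) (hw : ∀ a, 0 < w a)
    (S Sstar : Finset α)
    (hSstarcard : Sstar.card ≤ n)
    (hratio : (∑ v ∈ S, (⌊p v * n / (eps * P)⌋ : ℝ)) / ∑ v ∈ S, w v ≥
              (∑ v ∈ Sstar, (⌊p v * n / (eps * P)⌋ : ℝ)) / ∑ v ∈ Sstar, w v) :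
    (∑ v ∈ S, p v) / ∑ v ∈ S, w v ≥
      (∑ v ∈ Sstar, p v) / ∑ v ∈ Sstar, w v - eps * P / ∑ v ∈ Sstar, w v := by
  set c : ℝ := eps * P / n
  have hc : 0 < c := by positivity
  have hscale : ∀ v, p v * n / (eps * P) = p v / c := fun v => (div_div_eq_mul_div _ _ _).symm
  simp only [hscale] at hratio
  have hcard : (Sstar.card : ℝ) * c ≤ eps * P := by
    calc (Sstar.card : ℝ) * c ≤ n * c := by gcongr
      _ = eps * P := mul_div_cancel₀ _ (by positivity)
  have hwS : 0 ≤ ∑ v ∈ S, w v := sum_nonneg fun v _ => (hw v).le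
  have hwSstar : 0 ≤ ∑ v ∈ Sstar, w v := sum_nonneg fun v _ => (hw v).le
  rw [ge_iff_le, ← sub_div]
  calc (∑ v ∈ Sstar, p v - eps * P) / ∑ v ∈ Sstar, w v
      ≤ (∑ v ∈ Sstar, p v - Sstar.card * c) / ∑ v ∈ Sstar, w v := by gcongr
    _ ≤ c * (∑ v ∈ Sstar, (⌊p v / c⌋ : ℝ)) / ∑ v ∈ Sstar, w v := by
      gcongr; exact sum_sub_card_mul_le_mul_sum_floor_div hc Sstar p
    _ ≤ c * (∑ v ∈ S, (⌊p v / c⌋ : ℝ)) / ∑ v ∈ S, w v := by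
      simp only [mul_div_assoc]; exact mul_le_mul_of_nonneg_left hratio hc.le
    _ ≤ (∑ v ∈ S, p v) / ∑ v ∈ S, w v := by
      gcongr; exact mul_sum_floor_div_le hc S p

/-- Scaled-profit lemma for the knapsack FPTAS: if S maximizes the adjusted
profit-to-weight ratio (with adjusted profits p'(v) = ⌊p(v)·n/(ε·P)⌋) against S*,
and both sets have at most n items, then r(S) ≥ r(S*) - ε·P / w(S*). -/
theorem stmt_15 {α : Type*} (n : ℕ) (hn : 0 < n) (eps P : ℝ)
    (heps : 0 < eps) (hP : 0 < P)
    (p w : α → ℝ) (hp0 : ∀ a, 0 ≤ p a) (hpP : ∀ a, p a ≤ P) (hw : ∀ a, 0 < w a)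
    (S Sstar : Finset α) (hS : S.Nonempty) (hSstar : Sstar.Nonempty)
    (hScard : S.card ≤ n) (hSstarcard : Sstar.card ≤ n)
    (hratio : (∑ v ∈ S, (⌊p v * n / (eps * P)⌋ : ℝ)) / ∑ v ∈ S, w v ≥
              (∑ v ∈ Sstar, (⌊p v * n / (eps * P)⌋ : ℝ)) / ∑ v ∈ Sstar, w v) :
    (∑ v ∈ S, p v) / ∑ v ∈ S, w v ≥
      (∑ v ∈ Sstar, p v) / ∑ v ∈ Sstar, w v - eps * P / ∑ v ∈ Sstar, w v :=
  stmt_15_general n hn eps P heps hP p w hw S Sstar hSstarcard hratio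
end

section
/- Let D be a finite DAG and let L, P, T partition its nodes (large, petite, tiny). Let X be a subset of L, let D_X be the sub-DAG induced by P ∪ X, and let Z be the union of the tiny sinks of D and the petite sinks of D_X. If X contains all large nodes reachable from a node u, then u can reach some node of X ∪ Z. -/
/-! Every node reachable from `u` outside `X ∪ Z` has an out-neighbour: a large one would lie
in `X`, and a petite or tiny node outside `Z` is not a sink of `D_X`, resp. of `D`. Since a
finite acyclic digraph has no infinite walks, walking forward from `u` must stop in `X ∪ Z`. -/

open Relation

section

variable {V : Type*} {D : V → V → Prop}

theorem wellFounded_flip_of_forall_not_transGen [Finite V] (hacyc : ∀ v, ¬ TransGen D v v) :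
    WellFounded (flip D) :=
  letI : IsTrans V (flip (TransGen D)) := ⟨fun _ _ _ h₁ h₂ => h₂.trans h₁⟩
  letI : Std.Irrefl (flip (TransGen D)) := ⟨hacyc⟩
  Subrelation.wf (r := flip (TransGen D)) (fun h => TransGen.single h)
    (Finite.wellFounded_of_trans_of_irrefl (flip (TransGen D)))

theorem exists_mem_reflTransGen_of_forall_exists_step (hwf : WellFounded (flip D)) {S : Set V}
    {u : V} (hstep : ∀ v, ReflTransGen D u v → v ∉ S → ∃ w, D v w) :
    ∃ z ∈ S, ReflTransGen D u z := by
  induction u using hwf.induction with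
  | _ u ih =>
    by_cases hu : u ∈ S
    · exact ⟨u, hu, .refl⟩
    obtain ⟨w, huw⟩ := hstep u .refl hu
    obtain ⟨z, hz, hwz⟩ := ih w huw fun v hwv => hstep v (.head huw hwv)
    exact ⟨z, hz, .head huw hwz⟩

end

theorem stmt_16_general {V : Type*} [Fintype V] (D : V → V → Prop)
    (hacyc : ∀ v, ¬ Relation.TransGen D v v)
    (L Pe T : Set V)
    (hpart : ∀ v, (v ∈ L ∧ v ∉ Pe ∧ v ∉ T) ∨ (v ∉ L ∧ v ∈ Pe ∧ v ∉ T) ∨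
      (v ∉ L ∧ v ∉ Pe ∧ v ∈ T))
    (X : Set V)
    (Z : Set V)
    (hZ : Z = {v | v ∈ T ∧ ∀ w, ¬ D v w} ∪
          {v | v ∈ Pe ∧ ∀ w ∈ Pe ∪ X, ¬ D v w})
    (u : V)
    (hu : ∀ v, Relation.ReflTransGen D u v → v ∈ L → v ∈ X) :
    ∃ z ∈ X ∪ Z, Relation.ReflTransGen D u z := by
  refine exists_mem_reflTransGen_of_forall_exists_step
    (wellFounded_flip_of_forall_not_transGen hacyc) fun v huv hv => ?_
  subst hZ
  simp only [Set.mem_union, Set.mem_ofPred_eq, not_or, not_and, not_forall, not_not] at hv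
  obtain ⟨hvX, hvT, hvPe⟩ := hv
  rcases hpart v with ⟨hvL, -, -⟩ | ⟨-, hPe, -⟩ | ⟨-, -, hT⟩
  · exact absurd (hu v huv hvL) hvX
  · obtain ⟨w, -, hw⟩ := hvPe hPe
    exact ⟨w, hw⟩
  · exact hvT hT

/-- In a finite DAG with nodes partitioned into large (L), petite (Pe), and tiny (T) nodes,
with X ⊆ L and Z the union of the tiny sinks of D with the petite sinks of the sub-DAG
induced by Pe ∪ X: if every large node reachable from u lies in X, then u reaches some
node of X ∪ Z. -/
theorem stmt_16 {V : Type*} [Fintype V] (D : V → V → Prop)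
    (hacyc : ∀ v, ¬ Relation.TransGen D v v)
    (L Pe T : Set V)
    (hpart : ∀ v, (v ∈ L ∧ v ∉ Pe ∧ v ∉ T) ∨ (v ∉ L ∧ v ∈ Pe ∧ v ∉ T) ∨
      (v ∉ L ∧ v ∉ Pe ∧ v ∈ T))
    (X : Set V) (hX : X ⊆ L)
    (Z : Set V)
    (hZ : Z = {v | v ∈ T ∧ ∀ w, ¬ D v w} ∪
          {v | v ∈ Pe ∧ ∀ w ∈ Pe ∪ X, ¬ D v w})
    (u : V)
    (hu : ∀ v, Relation.ReflTransGen D u v → v ∈ L → v ∈ X) :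
    ∃ z ∈ X ∪ Z, Relation.ReflTransGen D u z :=
  stmt_16_general D hacyc L Pe T hpart X Z hZ u hu
end
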